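/- arXiv:1402.5589 — 2 statements merged into one kernel-verified Lean document; each statement's English description precedes it below -/
import Mathlib

section
/- With c = 1/200: for any n ≥ 1, 0 < ε ≤ 1, 0 < α ≤ 1, and any integer k with 1 ≤ k ≤ c · log n / (log log(5n) + |log ε| + |log α|), one has k ≤ n/2 and (2k/(δ²n))^{1/p} ≤ √k · δ, where p = (1 + α)k and δ = (α/(16(1+α))) · ε/k^{3/2}. -/
open Real

set_option maxHeartbeats 1600000 in
/-- **Lemma 2.2.** With `c = 1/200`: for any `n ≥ 1`, `0 < ε ≤ 1`, `0 < α ≤ 1` and any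
integer `k` with `1 ≤ k ≤ c * log n / (log log (5n) + |log ε| + |log α|)`, one has
`k ≤ n/2` and `(2k/(δ²n))^(1/p) ≤ √k * δ`, where `p = (1+α)k` and
`δ = (α/(16(1+α))) * ε / k^(3/2)`. -/
theorem numerical_lemma (n k : ℕ) (ε α : ℝ) (hn : 1 ≤ n)
    (hε : 0 < ε) (hε1 : ε ≤ 1) (hα : 0 < α) (hα1 : α ≤ 1) (hk : 1 ≤ k)
    (hkb : (k : ℝ) ≤ (1 / 200) * Real.log n /
      (Real.log (Real.log (5 * (n : ℝ))) + |Real.log ε| + |Real.log α|)) :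
    (k : ℝ) ≤ (n : ℝ) / 2 ∧
      (2 * (k : ℝ) / ((α / (16 * (1 + α)) * (ε / (k : ℝ) ^ ((3 : ℝ) / 2))) ^ 2 * n))
          ^ (1 / ((1 + α) * (k : ℝ)))
        ≤ Real.sqrt k * (α / (16 * (1 + α)) * (ε / (k : ℝ) ^ ((3 : ℝ) / 2))) := by
  have hK1 : (1:ℝ) ≤ (k:ℝ) := by exact_mod_cast hk
  have hK0 : (0:ℝ) < (k:ℝ) := by linarith
  have hn1 : (1:ℝ) ≤ (n:ℝ) := by exact_mod_cast hn
  have hn0 : (0:ℝ) < (n:ℝ) := by linarith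
  set K : ℝ := (k:ℝ) with hKdef
  set L : ℝ := Real.log n with hLdef
  set G : ℝ := Real.log (Real.log (5 * (n:ℝ))) with hGdef
  set A : ℝ := |Real.log α| with hAdef
  set E : ℝ := |Real.log ε| with hEdef
  have hA0 : 0 ≤ A := abs_nonneg _
  have hE0 : 0 ≤ E := abs_nonneg _
  -- log 2 numerics
  have hlog2u : Real.log 2 < 0.6932 := by
    have := Real.log_two_lt_d9; linarith
  have hlog2l : (0.693:ℝ) < Real.log 2 := by
    have := Real.log_two_gt_d9; linarith
  -- log(5n) ≥ 1.386
  have h5n4 : (4:ℝ) ≤ 5 * (n:ℝ) := by linarith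
  have h5n0 : (0:ℝ) < 5 * (n:ℝ) := by linarith
  have hlog5n : (1.386:ℝ) ≤ Real.log (5 * (n:ℝ)) := by
    have h4 : Real.log 4 ≤ Real.log (5 * (n:ℝ)) :=
      (Real.log_le_log_iff (by norm_num) h5n0).mpr h5n4
    have : Real.log 4 = 2 * Real.log 2 := by
      rw [show (4:ℝ) = 2 ^ 2 by norm_num, Real.log_pow]; push_cast; ring
    linarith
  -- G ≥ 0.27
  have hG : (0.27:ℝ) ≤ G := by
    have h1 : Real.log ((1.386:ℝ)⁻¹) ≤ (1.386:ℝ)⁻¹ - 1 :=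
      Real.log_le_sub_one_of_pos (by norm_num)
    rw [Real.log_inv] at h1
    have h2 : Real.log 1.386 ≤ G :=
      (Real.log_le_log_iff (by norm_num) (by linarith)).mpr hlog5n
    have : (0.27:ℝ) ≤ 1 - (1.386:ℝ)⁻¹ := by norm_num
    linarith
  have hD0 : (0:ℝ) < G + E + A := by linarith
  have hkD : K * (G + E + A) ≤ L / 200 := by
    have := (le_div_iff₀ hD0).mp hkb
    linarith
  have hD027 : (0.27:ℝ) ≤ G + E + A := by linarith
  have hKD2 : K * 0.27 ≤ K * (G + E + A) :=
    mul_le_mul_of_nonneg_left hD027 hK0.le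
  have hKD1 : (0.27:ℝ) ≤ K * (G + E + A) := by linarith [hKD2]
  have hL54 : (54:ℝ) ≤ L := by linarith
  have hLn : L ≤ (n:ℝ) := by
    have := Real.log_le_sub_one_of_pos hn0; linarith
  -- k ≤ L (in fact k ≤ L/54)
  have hKL : K ≤ L := by linarith
  -- Part 1
  have part1 : K ≤ (n:ℝ) / 2 := by linarith
  refine ⟨part1, ?_⟩
  -- log K ≤ G
  have hlogK0 : 0 ≤ Real.log K := Real.log_nonneg hK1
  have hlogKG : Real.log K ≤ G := by
    have h1 : Real.log K ≤ Real.log L := (Real.log_le_log_iff hK0 (by linarith)).mpr hKL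
    have h2 : L ≤ Real.log (5 * (n:ℝ)) :=
      (Real.log_le_log_iff hn0 h5n0).mpr (by linarith)
    have h3 : Real.log L ≤ G := (Real.log_le_log_iff (by linarith) (by linarith)).mpr h2
    linarith
  -- the quantity δ
  set d : ℝ := α / (16 * (1 + α)) * (ε / K ^ ((3 : ℝ) / 2)) with hddef
  have hKr0 : (0:ℝ) < K ^ ((3:ℝ)/2) := Real.rpow_pos_of_pos hK0 _
  have hKr1 : (1:ℝ) ≤ K ^ ((3:ℝ)/2) := Real.one_le_rpow hK1 (by norm_num)
  have hd0 : 0 < d := by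
    apply mul_pos (div_pos hα (by linarith)) (div_pos hε hKr0)
  have hd1 : d ≤ 1 := by
    rw [hddef]
    have h1 : α / (16 * (1 + α)) ≤ 1 :=
      div_le_one_of_le₀ (by linarith) (by linarith)
    have h2 : ε / K ^ ((3:ℝ)/2) ≤ 1 :=
      div_le_one_of_le₀ (by linarith) (by linarith)
    exact mul_le_one₀ h1 (div_pos hε hKr0).le h2
  have hlogd0 : Real.log d ≤ 0 := Real.log_nonpos hd0.le hd1
  -- bound on -log d
  have hlog32 : Real.log (16 * (1 + α)) ≤ 3.5 := by
    have h1 : Real.log (16 * (1 + α)) ≤ Real.log 32 :=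
      (Real.log_le_log_iff (by linarith) (by norm_num)).mpr (by linarith)
    have h2 : Real.log 32 = 5 * Real.log 2 := by
      rw [show (32:ℝ) = 2 ^ 5 by norm_num, Real.log_pow]; push_cast; ring
    linarith
  have hlogd : Real.log d = Real.log α - Real.log (16 * (1 + α))
      + (Real.log ε - 3 / 2 * Real.log K) := by
    rw [hddef, Real.log_mul (by positivity) (by positivity),
      Real.log_div (ne_of_gt hα) (by positivity),
      Real.log_div (ne_of_gt hε) (by positivity),
      Real.log_rpow hK0]
  have hnegla : -Real.log α ≤ A := neg_le_abs _
  have hnegle : -Real.log ε ≤ E := neg_le_abs _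
  have hM : -Real.log d ≤ 3.5 + A + E + 3 / 2 * G := by
    rw [hlogd]; linarith
  have hM14 : -Real.log d ≤ 14.5 * (G + E + A) := by linarith
  have hM0 : 0 ≤ -Real.log d := by linarith
  -- the main inequality on logs
  have hmain : Real.log 2 + Real.log K + 4 * K * (-Real.log d) ≤ L := by
    have h1 : 4 * K * (-Real.log d) ≤ 4 * K * (14.5 * (G + E + A)) :=
      mul_le_mul_of_nonneg_left hM14 (by linarith)
    have h2 : G + E + A ≤ K * (G + E + A) :=
      le_mul_of_one_le_left hD0.le hK1
    linarith
  set p : ℝ := (1 + α) * K with hpdef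
  have hp0 : (0:ℝ) < p := by positivity
  set b : ℝ := Real.sqrt K * d with hbdef
  have hsq0 : 0 < Real.sqrt K := Real.sqrt_pos.mpr hK0
  have hb0 : 0 < b := mul_pos hsq0 hd0
  set a : ℝ := 2 * K / (d ^ 2 * (n:ℝ)) with hadef
  have ha0 : 0 < a := by positivity
  have hloga : Real.log a = Real.log 2 + Real.log K - (2 * Real.log d + L) := by
    rw [hadef, Real.log_div (by positivity) (by positivity),
      Real.log_mul (by norm_num) (ne_of_gt hK0),
      Real.log_mul (by positivity) (ne_of_gt hn0), Real.log_pow]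
    push_cast; ring
  have hlogb : Real.log b = Real.log K / 2 + Real.log d := by
    rw [hbdef, Real.log_mul (ne_of_gt hsq0) (ne_of_gt hd0), Real.log_sqrt hK0.le]
  have hkey : Real.log a ≤ p * Real.log b := by
    rw [hloga, hlogb, hpdef]
    have h4 : (1 + α) * (K * (-Real.log d)) ≤ 2 * (K * (-Real.log d)) :=
      mul_le_mul_of_nonneg_right (by linarith) (mul_nonneg hK0.le hM0)
    have h5 : 0 ≤ (1 + α) * K * (Real.log K / 2) := by positivity
    have h6 : 1 * (-Real.log d) ≤ K * (-Real.log d) :=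
      mul_le_mul_of_nonneg_right hK1 hM0
    linarith [h4, h5, h6, hmain]
  have hab : a ≤ b ^ p := by
    calc a = Real.exp (Real.log a) := (Real.exp_log ha0).symm
      _ ≤ Real.exp (p * Real.log b) := Real.exp_le_exp.mpr hkey
      _ = b ^ p := by rw [Real.rpow_def_of_pos hb0, mul_comm]
  have h := Real.rpow_le_rpow ha0.le hab (by positivity : (0:ℝ) ≤ 1 / p)
  rw [← Real.rpow_mul hb0.le, mul_one_div, div_self (ne_of_gt hp0),
    Real.rpow_one] at h
  exact h
end

section
/- Let n ≥ 1, let k be an integer with 1 ≤ k ≤ n/2, let δ > 0 and p > 0, and let v = (v₁, …, vₙ) ∈ ℝⁿ with |v| = 1. Let J ⊆ {1, …, n} be a uniformly random subset of size k. Then 𝔼 (Σ_{j ∈ J} vⱼ²)^{p/2} ≤ 2k/(δ²n) + (k δ²)^{p/2}. -/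
/-! Write `X_J = ∑_{j ∈ J} v_j² ∈ [0, 1]` and `t = kδ²`. Splitting at `x = t` gives the pointwise
truncation bound `x^q ≤ x / t + t^q` on `[0, 1]` (above `t`, `x^q ≤ 1 < x / t`), a Markov-type
estimate. Averaging it over `J`, double counting gives `𝔼 X_J = k / n`, so the average of
`X_J^(p/2)` is at most `1 / (nδ²) + (kδ²)^(p/2)`, and `1 ≤ 2k`. -/

open Real

theorem Real.rpow_le_div_add_rpow {x t q : ℝ} (hx₀ : 0 ≤ x) (hx₁ : x ≤ 1) (ht : 0 < t)
    (hq : 0 ≤ q) : x ^ q ≤ x / t + t ^ q := by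
  rcases le_or_gt x t with hxt | htx
  · have := div_nonneg hx₀ ht.le
    have := rpow_le_rpow hx₀ hxt hq
    linarith
  · have := (one_lt_div ht).2 htx
    have := rpow_le_one hx₀ hx₁ hq
    have := rpow_nonneg ht.le q
    linarith

namespace Finset

theorem sum_rpow_le_sum_div_add_card_mul_rpow {α : Type*} (s : Finset α) {f : α → ℝ}
    (hf : ∀ a ∈ s, 0 ≤ f a ∧ f a ≤ 1) {t q : ℝ} (ht : 0 < t) (hq : 0 ≤ q) :
    ∑ a ∈ s, f a ^ q ≤ (∑ a ∈ s, f a) / t + #s * t ^ q := by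
  calc ∑ a ∈ s, f a ^ q ≤ ∑ a ∈ s, (f a / t + t ^ q) :=
        sum_le_sum fun a ha => rpow_le_div_add_rpow (hf a ha).1 (hf a ha).2 ht hq
    _ = (∑ a ∈ s, f a) / t + #s * t ^ q := by
        rw [sum_add_distrib, sum_div, sum_const, nsmul_eq_mul]

theorem card_mul_sum_powersetCard_univ_sum {ι R : Type*} [Fintype ι] [DecidableEq ι]
    [CommSemiring R] (k : ℕ) (f : ι → R) :
    (Fintype.card ι : R) * ∑ J ∈ powersetCard k univ, ∑ j ∈ J, f j
      = k * (Fintype.card ι).choose k * ∑ j, f j := by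
  rcases k with _ | k
  · simp
  have hcount (j : ι) :
      #{J ∈ powersetCard (k + 1) univ | j ∈ J} = (Fintype.card ι - 1).choose k := by
    simpa using card_filter_powersetCard_subset {j} univ (k + 1) (subset_univ _) (by simp)
  have hchoose : Fintype.card ι * (Fintype.card ι - 1).choose k
      = (k + 1) * (Fintype.card ι).choose (k + 1) := by
    rcases Fintype.card ι with _ | m
    · simp
    · simpa [mul_comm] using Nat.add_one_mul_choose_eq m k
  rw [sum_comm' (t' := univ) (s' := fun j => {J ∈ powersetCard (k + 1) univ | j ∈ J})
    (fun J j => by simp)]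
  simp only [sum_const, hcount, nsmul_eq_mul, ← mul_sum, ← mul_assoc]
  exact_mod_cast congrArg (fun m : ℕ => (m : R) * ∑ j, f j) hchoose

end Finset

theorem expected_truncated_projection_bound_general (n k : ℕ) (hk : 1 ≤ k)
    (δ p : ℝ) (hδ : 0 < δ) (hp : 0 < p)
    (v : EuclideanSpace ℝ (Fin n)) (hv : ‖v‖ = 1) :
    (∑ J ∈ Finset.powersetCard k (Finset.univ : Finset (Fin n)),
        (∑ j ∈ J, v j ^ 2) ^ (p / 2)) / (n.choose k : ℝ)
      ≤ 2 * (k : ℝ) / (δ ^ 2 * n) + ((k : ℝ) * δ ^ 2) ^ (p / 2) := by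
  rcases (n.choose k).eq_zero_or_pos with hC | hC
  · rw [hC, Nat.cast_zero, div_zero]
    positivity
  have hn : (0 : ℝ) < n := by
    have hkn : k ≤ n := by
      by_contra h
      exact hC.ne' (Nat.choose_eq_zero_of_lt (by omega))
    exact_mod_cast (by omega : 0 < n)
  have hsq : ∑ j, v j ^ 2 = 1 := by
    simpa [hv] using (EuclideanSpace.real_norm_sq_eq v).symm
  have hmass : ∀ J ∈ Finset.powersetCard k Finset.univ,
      0 ≤ ∑ j ∈ J, v j ^ 2 ∧ ∑ j ∈ J, v j ^ 2 ≤ 1 := fun J _ =>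
    ⟨Finset.sum_nonneg fun j _ => sq_nonneg _,
      hsq ▸ Finset.sum_le_sum_of_subset_of_nonneg (Finset.subset_univ J) fun j _ _ => sq_nonneg _⟩
  have hmean :
      ∑ J ∈ Finset.powersetCard k Finset.univ, ∑ j ∈ J, v j ^ 2 = k * n.choose k / n := by
    rw [eq_div_iff hn.ne', mul_comm]
    have := Finset.card_mul_sum_powersetCard_univ_sum k fun j : Fin n => v j ^ 2
    rwa [Fintype.card_fin, hsq, mul_one] at this
  calc _ ≤ ((∑ J ∈ Finset.powersetCard k Finset.univ, ∑ j ∈ J, v j ^ 2) / (k * δ ^ 2)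
        + n.choose k * (k * δ ^ 2) ^ (p / 2)) / n.choose k := by
        gcongr
        simpa using Finset.sum_rpow_le_sum_div_add_card_mul_rpow _ hmass (by positivity)
          (by positivity : 0 ≤ p / 2)
    _ = 1 / (δ ^ 2 * n) + ((k : ℝ) * δ ^ 2) ^ (p / 2) := by
        rw [hmean]
        field_simp
    _ ≤ _ := by
        gcongr
        linarith [(Nat.one_le_cast (α := ℝ)).2 hk]

/-- For a unit vector `v ∈ ℝⁿ` and a uniformly random `k`-element subset
`J ⊆ {1,…,n}` (with `1 ≤ k ≤ n/2`, `δ > 0`, `p > 0`), one has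
`𝔼 (Σ_{j ∈ J} vⱼ²)^(p/2) ≤ 2k/(δ²n) + (kδ²)^(p/2)`.
The expectation is written as the average over `Finset.powersetCard k univ`. -/
theorem expected_truncated_projection_bound (n k : ℕ) (hn : 1 ≤ n) (hk : 1 ≤ k)
    (hkn : (k : ℝ) ≤ (n : ℝ) / 2) (δ p : ℝ) (hδ : 0 < δ) (hp : 0 < p)
    (v : EuclideanSpace ℝ (Fin n)) (hv : ‖v‖ = 1) :
    (∑ J ∈ Finset.powersetCard k (Finset.univ : Finset (Fin n)),
        (∑ j ∈ J, v j ^ 2) ^ (p / 2)) / (n.choose k : ℝ)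
      ≤ 2 * (k : ℝ) / (δ ^ 2 * n) + ((k : ℝ) * δ ^ 2) ^ (p / 2) :=
  expected_truncated_projection_bound_general n k hk δ p hδ hp v hv
end
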